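/- Let G = (Ω,·) and G' = (Ω,∘) be loops and let A, B, C be permutations of Ω such that P(x,φ)=0 for all x and each φ ∈ {A,B,C}. Then (A,B,C) is an isotopism from G to G' if and only if μ_x(B) = C (L'_{xBA})^{-1} L_x B^{-1} for all x ∈ Ω, where μ_x(B) = B^{-1} L_x B L_{xB}^{-1} and L'_z is left translation in G'. -/

import Mathlib

/-- A loop: a quasigroup (all left/right translations bijective) with identity `e`.
Translations are given as permutations `L x`, `R x` with `y L_x = x·y`, `y R_x = y·x`. -/
structure Loop (α : Type*) where
  mul : α → α → α
  e : α
  L : α → Equiv.Perm α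
  R : α → Equiv.Perm α
  L_apply : ∀ x y, L x y = mul x y
  R_apply : ∀ x y, R x y = mul y x
  one_mul : ∀ x, mul e x = x
  mul_one : ∀ x, mul x e = x

namespace Loop

variable {α : Type*}

/-- The deviation `μ_x(φ) = φ⁻¹ L_x φ L_{xφ}⁻¹` (maps acting on the right,
so `e.trans f` means "apply `e` then `f`"). -/
def dev (Q : Loop α) (φ : Equiv.Perm α) (x : α) : Equiv.Perm α :=
  ((φ⁻¹.trans (Q.L x)).trans φ).trans (Q.L (φ x))⁻¹

/-- The condition `P(x,φ) = 0`, i.e. `L_x φ = φ L_{xφ}⁻¹ φ L_x φ⁻¹ L_{xφ}`. -/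
def PzeroAt (Q : Loop α) (φ : Equiv.Perm α) (x : α) : Prop :=
  (Q.L x).trans φ =
    (((φ.trans (Q.L (φ x))⁻¹).trans φ).trans ((Q.L x).trans φ⁻¹)).trans (Q.L (φ x))

/-- `P(x,φ) = 0` for all `x`. -/
def Pzero (Q : Loop α) (φ : Equiv.Perm α) : Prop := ∀ x, Q.PzeroAt φ x

/-- `φ` is an automorphism of the loop. -/
def IsAut (Q : Loop α) (φ : Equiv.Perm α) : Prop :=
  ∀ x y, φ (Q.mul x y) = Q.mul (φ x) (φ y)

/-- Left inner mapping `L(x,y) = L_x L_y L_{yx}⁻¹`. -/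
def Linn (Q : Loop α) (x y : α) : Equiv.Perm α :=
  ((Q.L x).trans (Q.L y)).trans (Q.L (Q.mul y x))⁻¹

/-- Right inner mapping `R(x,y) = R_x R_y R_{xy}⁻¹`. -/
def Rinn (Q : Loop α) (x y : α) : Equiv.Perm α :=
  ((Q.R x).trans (Q.R y)).trans (Q.R (Q.mul x y))⁻¹

/-- Middle inner mapping `T(x) = R_x L_x⁻¹`. -/
def Tinn (Q : Loop α) (x : α) : Equiv.Perm α :=
  (Q.R x).trans (Q.L x)⁻¹

end Loop

/-- `(A,B,C)` is an isotopism from the loop `G` to the loop `G'` (same underlying set). -/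
def IsIsotopism {α : Type*} (G G' : Loop α) (A B C : Equiv.Perm α) : Prop :=
  ∀ x y, G'.mul (A x) (B y) = C (G.mul x y)

namespace Loop

variable {α : Type*}

/-- In `Equiv.Perm`, `f * g = g.trans f`, so the right-hand side is the paper's
`μ_x(φ) = L_{xφ}⁻¹ φ L_x φ⁻¹` with maps acting on the right. -/
theorem dev_eq_of_pzeroAt {Q : Loop α} {φ : Equiv.Perm α} {x : α} (h : Q.PzeroAt φ x) :
    Q.dev φ x = φ⁻¹ * Q.L x * φ * (Q.L (φ x))⁻¹ := by
  simp only [PzeroAt, ← Equiv.Perm.mul_def] at h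
  calc Q.dev φ x = (Q.L (φ x))⁻¹ * (φ * Q.L x) * φ⁻¹ := by
        simp only [dev, ← Equiv.Perm.mul_def, mul_assoc]
    _ = φ⁻¹ * Q.L x * φ * (Q.L (φ x))⁻¹ := by rw [h]; group

end Loop

theorem isIsotopism_iff_forall_mul_L {α : Type*} {G G' : Loop α} {A B C : Equiv.Perm α} :
    IsIsotopism G G' A B C ↔ ∀ x, C * G.L x = G'.L (A x) * B := by
  simp only [IsIsotopism, Equiv.ext_iff, Equiv.Perm.mul_apply, G.L_apply, G'.L_apply]
  exact forall_congr' fun x => forall_congr' fun y => eq_comm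

theorem isotopism_iff_devB_general {α : Type*} (G G' : Loop α) (A B C : Equiv.Perm α)
    (hPB : G.Pzero B) :
    IsIsotopism G G' A B C ↔
      ∀ x, G.dev B x =
        ((C.trans (G'.L (A (B x)))⁻¹).trans (G.L x)).trans B⁻¹ := by
  rw [isIsotopism_iff_forall_mul_L, ← B.forall_congr_right]
  refine forall_congr' fun x => ?_
  -- after cancelling the common prefix `B⁻¹ L_x`, what remains is the isotopism identity at `xB`
  rw [Loop.dev_eq_of_pzeroAt (hPB x)]
  simp only [← Equiv.Perm.mul_def, mul_assoc, mul_right_inj]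
  rw [mul_inv_eq_iff_eq_mul, mul_assoc, eq_inv_mul_iff_mul_eq, eq_comm]

theorem isotopism_iff_devB {α : Type*} (G G' : Loop α) (A B C : Equiv.Perm α)
    (hPA : G.Pzero A) (hPB : G.Pzero B) (hPC : G.Pzero C) :
    IsIsotopism G G' A B C ↔
      ∀ x, G.dev B x =
        ((C.trans (G'.L (A (B x)))⁻¹).trans (G.L x)).trans B⁻¹ :=
  isotopism_iff_devB_general G G' A B C hPB
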